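/- arXiv:hep-th/0412102 — 4 statements merged into one kernel-verified Lean document; each statement's English description precedes it below -/
import Mathlib

section
/- If k is not divisible by 3, then the ℤ₃ automorphism A(λ₁,λ₂) = (k−λ₁−λ₂, λ₁) has no fixed point on P⁺ᵏ, and consequently 3 divides (k+1)(k+2)/2. -/
def Pk (k : ℕ) : Set (ℕ × ℕ) := {p | p.1 + p.2 ≤ k}

def Aaut (k : ℕ) (p : ℕ × ℕ) : ℕ × ℕ := (k - p.1 - p.2, p.1)

theorem Aaut_no_fixed_point (k : ℕ) (hk : ¬ 3 ∣ k) :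
    (∀ p ∈ Pk k, Aaut k p ≠ p) ∧ 3 ∣ (k + 1) * (k + 2) / 2 := by
  constructor
  · rintro ⟨a, b⟩ hp h
    simp only [Aaut, Prod.mk.injEq] at h
    simp only [Pk, Set.mem_setOf_eq] at hp
    obtain ⟨h1, h2⟩ := h
    exact hk ⟨a, by omega⟩
  · have h3 : 3 ∣ (k + 1) * (k + 2) := by
      have hm3 : k % 3 = 1 ∨ k % 3 = 2 := by
        have := Nat.mod_lt k (show 0 < 3 by norm_num)
        have : k % 3 ≠ 0 := fun h => hk (Nat.dvd_of_mod_eq_zero h)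
        omega
      rcases hm3 with h | h
      · exact Dvd.dvd.mul_left ⟨(k + 2) / 3, by omega⟩ _
      · exact Dvd.dvd.mul_right ⟨(k + 1) / 3, by omega⟩ _
    have h2 : 2 ∣ (k + 1) * (k + 2) := (Nat.even_mul_succ_self (k + 1)).two_dvd
    obtain ⟨m, hm⟩ := h2
    rw [hm, Nat.mul_div_cancel_left _ (by norm_num)]
    have : (3 : ℕ).Coprime 2 := by norm_num
    exact this.dvd_of_dvd_mul_left (hm ▸ h3)
end

section
/- For every λ = (λ₁,λ₂) ∈ P⁺ᵏ, one has T̂[A(λ)] ≡ T̂[λ] + (k+3)(k − 3λ₂ − t(λ)) (mod 3(k+3)), where t(λ) = λ₁ − λ₂ is any integer representative of the triality. -/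
def Tmod (p : ℕ × ℕ) : ℤ :=
  (p.1 + 1) ^ 2 + (p.1 + 1) * (p.2 + 1) + (p.2 + 1) ^ 2

theorem Tmod_Aaut (k : ℕ) (p : ℕ × ℕ) (hp : p ∈ Pk k) :
    Tmod (Aaut k p) ≡
      Tmod p + ((k : ℤ) + 3) * ((k : ℤ) - 3 * (p.2 : ℤ) - ((p.1 : ℤ) - (p.2 : ℤ)))
      [ZMOD 3 * (k + 3)] := by
  have hp' : p.1 + p.2 ≤ k := hp
  have hcast : ((k - p.1 - p.2 : ℕ) : ℤ) = (k : ℤ) - p.1 - p.2 := by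
    omega
  have : Tmod (Aaut k p) =
      Tmod p + ((k : ℤ) + 3) * ((k : ℤ) - 3 * (p.2 : ℤ) - ((p.1 : ℤ) - (p.2 : ℤ))) := by
    simp only [Tmod, Aaut]
    rw [hcast]
    ring
  rw [this]
end

section
/- The twist operator ρ(λ) = A^{k·t(λ)}(λ) on P⁺ᵏ is an involution: ρ(ρ(λ)) = λ for all λ ∈ P⁺ᵏ. -/
/-- The triality `t(λ) = λ₁ − λ₂ mod 3` (represented as `(λ₁ + 2λ₂) % 3`). -/
def trial (p : ℕ × ℕ) : ℕ := (p.1 + 2 * p.2) % 3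

/-- The twist `ρ(λ) = A^[k·t(λ) mod 3] λ`. -/
def rho (k : ℕ) (p : ℕ × ℕ) : ℕ × ℕ := (Aaut k)^[(k * trial p) % 3] p

lemma memA (k : ℕ) (p : ℕ × ℕ) (hp : p ∈ Pk k) : Aaut k p ∈ Pk k := by
  simp only [Pk, Set.mem_setOf_eq, Aaut] at *
  omega

lemma memIter (k : ℕ) (p : ℕ × ℕ) (hp : p ∈ Pk k) (n : ℕ) :
    (Aaut k)^[n] p ∈ Pk k := by
  induction n with
  | zero => simpa
  | succ n ih => rw [Function.iterate_succ_apply']; exact memA k _ ih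

lemma A3 (k : ℕ) (p : ℕ × ℕ) (hp : p ∈ Pk k) : (Aaut k)^[3] p = p := by
  obtain ⟨a, b⟩ := p
  simp only [Pk, Set.mem_setOf_eq] at hp
  show (Aaut k (Aaut k (Aaut k (a, b)))) = (a, b)
  simp only [Aaut, Prod.mk.injEq]
  constructor <;> omega

lemma trialA (k : ℕ) (p : ℕ × ℕ) (hp : p ∈ Pk k) :
    trial (Aaut k p) = (trial p + k) % 3 := by
  obtain ⟨a, b⟩ := p
  simp only [Pk, Set.mem_setOf_eq] at hp
  simp only [trial, Aaut]
  omega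

lemma trial_iter (k : ℕ) (p : ℕ × ℕ) (hp : p ∈ Pk k) (n : ℕ) :
    trial ((Aaut k)^[n] p) = (trial p + n * k) % 3 := by
  induction n with
  | zero => simp [trial]
  | succ n ih =>
      rw [Function.iterate_succ_apply', trialA k _ (memIter k p hp n), ih]
      have : (n + 1) * k = n * k + k := by ring
      rw [this]
      omega

theorem rho_involution (k : ℕ) (p : ℕ × ℕ) (hp : p ∈ Pk k) :
    rho k (rho k p) = p := by
  unfold rho
  rw [← Function.iterate_add_apply]
  rw [trial_iter k p hp]
  have htlt : trial p < 3 := Nat.mod_lt _ (by norm_num)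
  set t := trial p with ht_def
  have hk : k ≡ k % 3 [MOD 3] := (Nat.mod_modEq k 3).symm
  have e1 : (k * t) % 3 = (k % 3 * t) % 3 := hk.mul_right t
  have e2 : (t + (k % 3 * t) % 3 * k) % 3 = (t + (k % 3 * t) % 3 * (k % 3)) % 3 :=
    (hk.mul_left _).add_left t
  have e3 : ∀ x : ℕ, (k * x) % 3 = (k % 3 * x) % 3 := fun x => hk.mul_right x
  rw [e1, e3, e2]
  have hk3 : k % 3 = 0 ∨ k % 3 = 1 ∨ k % 3 = 2 := by omega
  have ht3 : t = 0 ∨ t = 1 ∨ t = 2 := by omega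
  rcases hk3 with h | h | h <;> rcases ht3 with h' | h' | h' <;>
    rw [h, h'] <;> norm_num <;>
    first
      | rfl
      | exact A3 k p hp
end

section
/- The twist operator ρ preserves the modular operator value: for all λ ∈ P⁺ᵏ, T̂[ρ(λ)] ≡ T̂[λ] (mod 3(k+3)), where ρ(λ) = A^{k·t(λ)}(λ). -/
lemma Tmod_A1 (k a b : ℕ) (h : a + b ≤ k) (h3 : (3:ℤ) ∣ ((k:ℤ) - a - 2*b)) :
    Tmod (Aaut k (a, b)) ≡ Tmod (a, b) [ZMOD 3 * (k + 3)] := by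
  obtain ⟨m, hm⟩ := h3
  have hc : ((k - a - b : ℕ) : ℤ) = (k:ℤ) - a - b := by omega
  apply Int.ModEq.symm
  rw [Int.modEq_iff_dvd]
  refine ⟨m, ?_⟩
  simp only [Tmod, Aaut, hc]
  linear_combination ((k:ℤ) + 3) * hm

lemma Tmod_A2 (k a b : ℕ) (h : a + b ≤ k) (h3 : (3:ℤ) ∣ ((k:ℤ) - 2*a - b)) :
    Tmod (Aaut k (Aaut k (a, b))) ≡ Tmod (a, b) [ZMOD 3 * (k + 3)] := by
  have hAA : Aaut k (Aaut k (a, b)) = (b, k - a - b) := by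
    show ((k - (k - a - b) - a : ℕ), (k - a - b : ℕ)) = (b, k - a - b)
    rw [Prod.mk.injEq]
    exact ⟨by omega, rfl⟩
  obtain ⟨m, hm⟩ := h3
  rw [hAA]
  have hc : ((k - a - b : ℕ) : ℤ) = (k:ℤ) - a - b := by omega
  apply Int.ModEq.symm
  rw [Int.modEq_iff_dvd]
  refine ⟨m, ?_⟩
  simp only [Tmod, hc]
  linear_combination ((k:ℤ) + 3) * hm

theorem Tmod_rho (k : ℕ) (p : ℕ × ℕ) (hp : p ∈ Pk k) :
    Tmod (rho k p) ≡ Tmod p [ZMOD 3 * (k + 3)] := by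
  obtain ⟨a, b⟩ := p
  have h : a + b ≤ k := hp
  have htr : trial (a, b) = (a + 2 * b) % 3 := rfl
  have he : (k * trial (a, b)) % 3 = 0 ∨ (k * trial (a, b)) % 3 = 1 ∨
      (k * trial (a, b)) % 3 = 2 := by omega
  have ht : (a + 2 * b) % 3 = 0 ∨ (a + 2 * b) % 3 = 1 ∨ (a + 2 * b) % 3 = 2 := by omega
  rcases he with he | he | he
  · show Tmod ((Aaut k)^[(k * trial (a, b)) % 3] (a, b)) ≡ _ [ZMOD 3 * (k + 3)]
    rw [he]
    simp
  · show Tmod ((Aaut k)^[(k * trial (a, b)) % 3] (a, b)) ≡ _ [ZMOD 3 * (k + 3)]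
    rw [he, Function.iterate_one]
    apply Tmod_A1 k a b h
    rw [htr] at he
    rcases ht with ht | ht | ht <;> rw [ht] at he <;> omega
  · show Tmod ((Aaut k)^[(k * trial (a, b)) % 3] (a, b)) ≡ _ [ZMOD 3 * (k + 3)]
    rw [he]
    show Tmod (Aaut k (Aaut k ((Aaut k)^[0] (a, b)))) ≡ _ [ZMOD 3 * (k + 3)]
    rw [Function.iterate_zero, id]
    apply Tmod_A2 k a b h
    rw [htr] at he
    rcases ht with ht | ht | ht <;> rw [ht] at he <;> omega
end
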